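/- arXiv:2501.09486 — 2 statements merged into one kernel-verified Lean document; each statement's English description precedes it below -/
import Mathlib

section
/- For any α > 0 there exists a constant c = c(α) such that for all a, b ∈ ℝ^k (any k ∈ ℕ): (1/c)·|⟦b⟧^α − ⟦a⟧^α| ≤ (|a| + |b|)^{α−1}·|b − a| ≤ c·|⟦b⟧^α − ⟦a⟧^α|. -/
noncomputable section

open Real

set_option maxHeartbeats 1000000

private lemma aux_mul {x α : ℝ} (hx : 0 ≤ x) (hα : 0 < α) : x ^ (α - 1) * x = x ^ α := by
  rcases eq_or_lt_of_le hx with h | h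
  · simp [← h, Real.zero_rpow hα.ne']
  · rw [Real.rpow_sub_one h.ne', div_mul_cancel₀ _ h.ne']

private lemma bern {α : ℝ} (hα : 0 < α) {A B : ℝ} (hA : 0 < A) (hB : 0 ≤ B) (hBA : B ≤ A) :
    min 1 α * (A ^ (α - 1) * (A - B)) ≤ A ^ α - B ^ α ∧
    A ^ α - B ^ α ≤ max 1 α * (A ^ (α - 1) * (A - B)) := by
  have f1 : A ^ (α - 1) * A = A ^ α := aux_mul hA.le hα
  have fB : B ^ (α - 1) * B = B ^ α := aux_mul hB hα
  have hT : 0 ≤ A ^ (α - 1) * (A - B) :=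
    mul_nonneg (Real.rpow_nonneg hA.le _) (by linarith)
  have hs : -1 ≤ B / A - 1 := by
    have : 0 ≤ B / A := div_nonneg hB hA.le
    linarith
  have hXpos : 0 < A ^ α := Real.rpow_pos_of_pos hA α
  have hsimp : 1 + (B / A - 1) = B / A := by ring
  have hdiv : (B / A) ^ α = B ^ α / A ^ α := Real.div_rpow hB hA.le α
  have hBA' : B / A * A ^ α = B * A ^ (α - 1) := by
    rw [← f1]; field_simp
  rcases le_total 1 α with h1 | h1
  · constructor
    · -- 1*T ≤ X - Y
      have hmin : min 1 α * (A ^ (α - 1) * (A - B)) ≤ 1 * (A ^ (α - 1) * (A - B)) :=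
        mul_le_mul_of_nonneg_right (min_le_left _ _) hT
      have hmono : B ^ (α - 1) ≤ A ^ (α - 1) := Real.rpow_le_rpow hB hBA (by linarith)
      have h2 : B ^ (α - 1) * B ≤ A ^ (α - 1) * B := mul_le_mul_of_nonneg_right hmono hB
      nlinarith [h2, f1, fB]
    · -- X - Y ≤ α*T
      have hbern := one_add_mul_self_le_rpow_one_add hs h1
      rw [hsimp, hdiv] at hbern
      have h2 := mul_le_mul_of_nonneg_right hbern hXpos.le
      rw [div_mul_cancel₀ _ hXpos.ne'] at h2
      have h3 : (1 + α * (B / A - 1)) * A ^ α = A ^ α + α * (B * A ^ (α - 1)) - α * A ^ α := by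
        rw [← hBA']; ring
      rw [h3] at h2
      have f1α : α * (A ^ (α - 1) * A) = α * A ^ α := by rw [f1]
      have hmax : α * (A ^ (α - 1) * (A - B)) ≤ max 1 α * (A ^ (α - 1) * (A - B)) :=
        mul_le_mul_of_nonneg_right (le_max_right _ _) hT
      nlinarith [h2, f1α, hmax]
  · constructor
    · -- α*T ≤ X - Y
      have hbern := rpow_one_add_le_one_add_mul_self hs hα.le h1
      rw [hsimp, hdiv] at hbern
      have h2 := mul_le_mul_of_nonneg_right hbern hXpos.le
      rw [div_mul_cancel₀ _ hXpos.ne'] at h2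
      have h3 : (1 + α * (B / A - 1)) * A ^ α = A ^ α + α * (B * A ^ (α - 1)) - α * A ^ α := by
        rw [← hBA']; ring
      rw [h3] at h2
      have f1α : α * (A ^ (α - 1) * A) = α * A ^ α := by rw [f1]
      have hmin : min 1 α * (A ^ (α - 1) * (A - B)) ≤ α * (A ^ (α - 1) * (A - B)) :=
        mul_le_mul_of_nonneg_right (min_le_right _ _) hT
      nlinarith [h2, f1α, hmin]
    · -- X - Y ≤ 1*T
      have hmax : 1 * (A ^ (α - 1) * (A - B)) ≤ max 1 α * (A ^ (α - 1) * (A - B)) :=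
        mul_le_mul_of_nonneg_right (le_max_left _ _) hT
      rcases eq_or_lt_of_le hB with h0 | h0
      · rw [← h0]
        rw [Real.zero_rpow hα.ne']
        nlinarith [f1, hmax]
      · have hmono : A ^ (α - 1) ≤ B ^ (α - 1) :=
          Real.rpow_le_rpow_of_nonpos h0 hBA (by linarith)
        have h2 : A ^ (α - 1) * B ≤ B ^ (α - 1) * B := mul_le_mul_of_nonneg_right hmono hB
        nlinarith [h2, f1, fB, hmax]

private lemma base {α : ℝ} {A B : ℝ} (hA : 0 < A) (hB : 0 ≤ B) (hBA : B ≤ A) :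
    min 1 (2 ^ (α - 1)) * A ^ (α - 1) ≤ (A + B) ^ (α - 1) ∧
    (A + B) ^ (α - 1) ≤ max 1 (2 ^ (α - 1)) * A ^ (α - 1) := by
  have hP : 0 ≤ A ^ (α - 1) := Real.rpow_nonneg hA.le _
  have h2A : ((2:ℝ) * A) ^ (α - 1) = 2 ^ (α - 1) * A ^ (α - 1) :=
    Real.mul_rpow (by norm_num) hA.le
  rcases le_total 1 α with h1 | h1
  · constructor
    · have := Real.rpow_le_rpow hA.le (by linarith : A ≤ A + B) (by linarith : (0:ℝ) ≤ α - 1)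
      calc min 1 (2 ^ (α - 1)) * A ^ (α - 1) ≤ 1 * A ^ (α - 1) :=
            mul_le_mul_of_nonneg_right (min_le_left _ _) hP
        _ = A ^ (α - 1) := one_mul _
        _ ≤ (A + B) ^ (α - 1) := this
    · have h := Real.rpow_le_rpow (by linarith : (0:ℝ) ≤ A + B)
        (by linarith : A + B ≤ 2 * A) (by linarith : (0:ℝ) ≤ α - 1)
      rw [h2A] at h
      calc (A + B) ^ (α - 1) ≤ 2 ^ (α - 1) * A ^ (α - 1) := h
        _ ≤ max 1 (2 ^ (α - 1)) * A ^ (α - 1) :=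
            mul_le_mul_of_nonneg_right (le_max_right _ _) hP
  · constructor
    · have h := Real.rpow_le_rpow_of_nonpos (by linarith : 0 < A + B)
        (by linarith : A + B ≤ 2 * A) (by linarith : α - 1 ≤ 0)
      rw [h2A] at h
      calc min 1 (2 ^ (α - 1)) * A ^ (α - 1) ≤ 2 ^ (α - 1) * A ^ (α - 1) :=
            mul_le_mul_of_nonneg_right (min_le_right _ _) hP
        _ ≤ (A + B) ^ (α - 1) := h
    · have h := Real.rpow_le_rpow_of_nonpos hA (by linarith : A ≤ A + B)
        (by linarith : α - 1 ≤ 0)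
      calc (A + B) ^ (α - 1) ≤ A ^ (α - 1) := h
        _ = 1 * A ^ (α - 1) := (one_mul _).symm
        _ ≤ max 1 (2 ^ (α - 1)) * A ^ (α - 1) :=
            mul_le_mul_of_nonneg_right (le_max_left _ _) hP

private lemma endpoints (α : ℝ) (hα : 0 < α) : ∃ c : ℝ, 0 < c ∧ ∀ A B : ℝ, 0 ≤ B → B ≤ A →
    (A ^ α - B ^ α ≤ c * ((A + B) ^ (α - 1) * (A - B)) ∧
     (A + B) ^ (α - 1) * (A - B) ≤ c * (A ^ α - B ^ α) ∧
     (A + B) ^ (α - 1) * (A + B) ≤ c * (A ^ α + B ^ α) ∧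
     A ^ α + B ^ α ≤ c * ((A + B) ^ (α - 1) * (A + B))) := by
  have h2p : (0:ℝ) < 2 ^ (α - 1) := Real.rpow_pos_of_pos (by norm_num) _
  set μ : ℝ := min 1 (2 ^ (α - 1)) with hμdef
  set ν : ℝ := max 1 (2 ^ (α - 1)) with hνdef
  have hμ : 0 < μ := lt_min one_pos h2p
  have hν : 0 < ν := lt_of_lt_of_le one_pos (le_max_left _ _)
  have hminα : 0 < min 1 α := lt_min one_pos hα
  have hmaxα : 0 < max 1 α := lt_of_lt_of_le one_pos (le_max_left _ _)
  set c : ℝ := max 1 α / μ + ν / min 1 α + 2 ^ α + 2 with hcdef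
  have h2α : (0:ℝ) < 2 ^ α := Real.rpow_pos_of_pos (by norm_num) _
  have hc : 0 < c := by positivity
  have hc1 : max 1 α ≤ c * μ := by
    have e : max 1 α / μ * μ = max 1 α := div_mul_cancel₀ _ hμ.ne'
    have r1 : 0 ≤ ν / min 1 α := by positivity
    rw [hcdef, add_mul, add_mul, add_mul, e]
    nlinarith [mul_nonneg r1 hμ.le, mul_pos h2α hμ, hμ]
  have hc2 : ν ≤ c * min 1 α := by
    have e : ν / min 1 α * min 1 α = ν := div_mul_cancel₀ _ hminα.ne'
    have r1 : 0 ≤ max 1 α / μ := by positivity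
    rw [hcdef, add_mul, add_mul, add_mul, e]
    nlinarith [mul_nonneg r1 hminα.le, mul_pos h2α hminα, hminα]
  have hc3 : (2:ℝ) ^ α ≤ c := by
    have r1 : 0 ≤ max 1 α / μ := by positivity
    have r2 : 0 ≤ ν / min 1 α := by positivity
    rw [hcdef]; linarith
  have hc4 : (2:ℝ) ≤ c := by
    have r1 : 0 ≤ max 1 α / μ := by positivity
    have r2 : 0 ≤ ν / min 1 α := by positivity
    rw [hcdef]; linarith
  refine ⟨c, hc, fun A B hB hBA => ?_⟩
  have hA : 0 ≤ A := hB.trans hBA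
  rcases eq_or_lt_of_le hA with h0 | hApos
  · subst h0
    have hB0 : B = 0 := le_antisymm hBA hB
    subst hB0
    refine ⟨?_, ?_, ?_, ?_⟩ <;> simp [Real.zero_rpow hα.ne']
  · have hbern := bern hα hApos hB hBA
    have hbase := base (α := α) hApos hB hBA
    have f1 : A ^ (α - 1) * A = A ^ α := aux_mul hApos.le hα
    have fS : (A + B) ^ (α - 1) * (A + B) = (A + B) ^ α := aux_mul (by linarith) hα
    have hT : 0 ≤ A ^ (α - 1) * (A - B) :=
      mul_nonneg (Real.rpow_nonneg hApos.le _) (by linarith)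
    have hW : 0 ≤ (A + B) ^ (α - 1) := Real.rpow_nonneg (by linarith) _
    have hX : 0 < A ^ α := Real.rpow_pos_of_pos hApos _
    have hY : 0 ≤ B ^ α := Real.rpow_nonneg hB _
    refine ⟨?_, ?_, ?_, ?_⟩
    · -- X - Y ≤ c * (W*(A-B))
      have h1 : μ * (A ^ (α - 1) * (A - B)) ≤ (A + B) ^ (α - 1) * (A - B) := by
        have := mul_le_mul_of_nonneg_right hbase.1 (by linarith : (0:ℝ) ≤ A - B)
        nlinarith [this]
      nlinarith [hbern.2, mul_le_mul_of_nonneg_left h1 hc.le,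
        mul_le_mul_of_nonneg_right hc1 hT]
    · -- W*(A-B) ≤ c * (X - Y)
      have h1 : (A + B) ^ (α - 1) * (A - B) ≤ ν * (A ^ (α - 1) * (A - B)) := by
        have := mul_le_mul_of_nonneg_right hbase.2 (by linarith : (0:ℝ) ≤ A - B)
        nlinarith [this]
      nlinarith [hbern.1, h1, mul_le_mul_of_nonneg_right hc2 hT,
        mul_le_mul_of_nonneg_left hbern.1 hc.le]
    · -- W*(A+B) ≤ c*(X+Y)
      rw [fS]
      have h1 : (A + B) ^ α ≤ (2 * A) ^ α :=
        Real.rpow_le_rpow (by linarith) (by linarith) hα.le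
      have h2 : ((2:ℝ) * A) ^ α = 2 ^ α * A ^ α := Real.mul_rpow (by norm_num) hApos.le
      nlinarith [mul_le_mul_of_nonneg_right hc3 hX.le]
    · -- X+Y ≤ c*(W*(A+B))
      rw [fS]
      have h1 : A ^ α ≤ (A + B) ^ α := Real.rpow_le_rpow hApos.le (by linarith) hα.le
      have h2 : B ^ α ≤ (A + B) ^ α := Real.rpow_le_rpow hB (by linarith) hα.le
      have hZ : 0 ≤ (A + B) ^ α := Real.rpow_nonneg (by linarith) _
      nlinarith [mul_le_mul_of_nonneg_right hc4 hZ]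

private lemma affine {u v τ M : ℝ} (hM : 0 ≤ M) (h1 : -M ≤ τ) (h2 : τ ≤ M)
    (hp : 0 ≤ u + 2 * v * M) (hm : 0 ≤ u - 2 * v * M) : 0 ≤ u + 2 * v * τ := by
  rcases eq_or_lt_of_le hM with h0 | hM'
  · subst h0
    have hτ0 : τ = 0 := le_antisymm (by simpa using h2) (by simpa using h1)
    subst hτ0
    simpa using hp
  · have p1 : 0 ≤ (M + τ) * (u + 2 * v * M) :=
      mul_nonneg (by linarith) hp
    have p2 : 0 ≤ (M - τ) * (u - 2 * v * M) :=
      mul_nonneg (by linarith) hm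
    nlinarith [p1, p2, hM']

private lemma scalar_key (α : ℝ) (hα : 0 < α) : ∃ c : ℝ, 0 < c ∧
    ∀ A B τ : ℝ, 0 ≤ A → 0 ≤ B → |τ| ≤ A * B →
    ((A + B) ^ (α - 1)) ^ 2 * (A ^ 2 + B ^ 2 - 2 * τ) ≤
      c ^ 2 * ((A ^ α) ^ 2 + (B ^ α) ^ 2 - 2 * (A ^ (α - 1) * B ^ (α - 1)) * τ) ∧
    (A ^ α) ^ 2 + (B ^ α) ^ 2 - 2 * (A ^ (α - 1) * B ^ (α - 1)) * τ ≤
      c ^ 2 * (((A + B) ^ (α - 1)) ^ 2 * (A ^ 2 + B ^ 2 - 2 * τ)) := by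
  obtain ⟨c, hc, hE⟩ := endpoints α hα
  refine ⟨c, hc, ?_⟩
  have key : ∀ A B τ : ℝ, 0 ≤ B → B ≤ A → |τ| ≤ A * B →
      ((A + B) ^ (α - 1)) ^ 2 * (A ^ 2 + B ^ 2 - 2 * τ) ≤
        c ^ 2 * ((A ^ α) ^ 2 + (B ^ α) ^ 2 - 2 * (A ^ (α - 1) * B ^ (α - 1)) * τ) ∧
      (A ^ α) ^ 2 + (B ^ α) ^ 2 - 2 * (A ^ (α - 1) * B ^ (α - 1)) * τ ≤
        c ^ 2 * (((A + B) ^ (α - 1)) ^ 2 * (A ^ 2 + B ^ 2 - 2 * τ)) := by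
    intro A B τ hB hBA hτ
    have hA : 0 ≤ A := hB.trans hBA
    obtain ⟨P1, P2, P3, P4⟩ := hE A B hB hBA
    have hM : 0 ≤ A * B := mul_nonneg hA hB
    have hτ1 : -(A * B) ≤ τ := neg_le_of_abs_le hτ
    have hτ2 : τ ≤ A * B := le_of_abs_le hτ
    have f1 : A ^ (α - 1) * A = A ^ α := aux_mul hA hα
    have fB : B ^ (α - 1) * B = B ^ α := aux_mul hB hα
    have hcross : A ^ (α - 1) * B ^ (α - 1) * (A * B) = A ^ α * B ^ α := by
      rw [← f1, ← fB]; ring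
    have hcross2 : c ^ 2 * (A ^ (α - 1) * B ^ (α - 1) * (A * B)) =
        c ^ 2 * (A ^ α * B ^ α) := by rw [hcross]
    have hW : 0 ≤ (A + B) ^ (α - 1) := Real.rpow_nonneg (by linarith) _
    have hWd : 0 ≤ (A + B) ^ (α - 1) * (A - B) := mul_nonneg hW (by linarith)
    have hWs : 0 ≤ (A + B) ^ (α - 1) * (A + B) := mul_nonneg hW (by linarith)
    have hXY : 0 ≤ A ^ α - B ^ α :=
      sub_nonneg.2 (Real.rpow_le_rpow hB hBA hα.le)
    have hXYs : 0 ≤ A ^ α + B ^ α := by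
      have := Real.rpow_nonneg hA α; have := Real.rpow_nonneg hB α; linarith
    -- squared endpoint inequalities
    have sq1 : (A ^ α - B ^ α) * (A ^ α - B ^ α) ≤
        (c * ((A + B) ^ (α - 1) * (A - B))) * (c * ((A + B) ^ (α - 1) * (A - B))) :=
      mul_self_le_mul_self hXY P1
    have sq2 : ((A + B) ^ (α - 1) * (A - B)) * ((A + B) ^ (α - 1) * (A - B)) ≤
        (c * (A ^ α - B ^ α)) * (c * (A ^ α - B ^ α)) :=
      mul_self_le_mul_self hWd P2
    have sq3 : ((A + B) ^ (α - 1) * (A + B)) * ((A + B) ^ (α - 1) * (A + B)) ≤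
        (c * (A ^ α + B ^ α)) * (c * (A ^ α + B ^ α)) :=
      mul_self_le_mul_self hWs P3
    have sq4 : (A ^ α + B ^ α) * (A ^ α + B ^ α) ≤
        (c * ((A + B) ^ (α - 1) * (A + B))) * (c * ((A + B) ^ (α - 1) * (A + B))) :=
      mul_self_le_mul_self hXYs P4
    have hcross3 : c ^ 2 * (A ^ (α - 1) * B ^ (α - 1) * (A * B)) =
        c ^ 2 * (A ^ α * B ^ α) := hcross2
    constructor
    · -- key1 : W side ≤ c² vpow side
      have hp : 0 ≤ (c ^ 2 * ((A ^ α) ^ 2 + (B ^ α) ^ 2) -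
          ((A + B) ^ (α - 1)) ^ 2 * (A ^ 2 + B ^ 2)) +
          2 * (((A + B) ^ (α - 1)) ^ 2 - c ^ 2 * (A ^ (α - 1) * B ^ (α - 1))) * (A * B) := by
        nlinarith [sq2, hcross2]
      have hm : 0 ≤ (c ^ 2 * ((A ^ α) ^ 2 + (B ^ α) ^ 2) -
          ((A + B) ^ (α - 1)) ^ 2 * (A ^ 2 + B ^ 2)) -
          2 * (((A + B) ^ (α - 1)) ^ 2 - c ^ 2 * (A ^ (α - 1) * B ^ (α - 1))) * (A * B) := by
        nlinarith [sq3, hcross2]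
      nlinarith [affine hM hτ1 hτ2 hp hm]
    · have hp : 0 ≤ (c ^ 2 * (((A + B) ^ (α - 1)) ^ 2 * (A ^ 2 + B ^ 2)) -
          ((A ^ α) ^ 2 + (B ^ α) ^ 2)) +
          2 * (A ^ (α - 1) * B ^ (α - 1) - c ^ 2 * ((A + B) ^ (α - 1)) ^ 2) * (A * B) := by
        nlinarith [sq1, hcross]
      have hm : 0 ≤ (c ^ 2 * (((A + B) ^ (α - 1)) ^ 2 * (A ^ 2 + B ^ 2)) -
          ((A ^ α) ^ 2 + (B ^ α) ^ 2)) -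
          2 * (A ^ (α - 1) * B ^ (α - 1) - c ^ 2 * ((A + B) ^ (α - 1)) ^ 2) * (A * B) := by
        nlinarith [sq4, hcross]
      nlinarith [affine hM hτ1 hτ2 hp hm]
  intro A B τ hA hB hτ
  rcases le_total B A with h | h
  · exact key A B τ hB h hτ
  · have hτ' : |τ| ≤ B * A := by rwa [mul_comm]
    have := key B A τ hA h hτ'
    rw [add_comm B A] at this
    exact ⟨by linarith [this.1], by linarith [this.2]⟩

/-- The vector power `⟦u⟧^α := |u|^(α-1) u`. -/
def vpow {k : ℕ} (α : ℝ) (u : EuclideanSpace ℝ (Fin k)) : EuclideanSpace ℝ (Fin k) :=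
  ‖u‖ ^ (α - 1) • u

open RealInnerProductSpace

/-- Lemma 3.2: comparison of `|⟦b⟧^α − ⟦a⟧^α|` with `(|a|+|b|)^{α-1}|b−a|`. -/
theorem vpow_diff_comparison (α : ℝ) (hα : 0 < α) :
    ∃ c : ℝ, 0 < c ∧ ∀ (k : ℕ) (a b : EuclideanSpace ℝ (Fin k)),
      (1 / c) * ‖vpow α b - vpow α a‖ ≤ (‖a‖ + ‖b‖) ^ (α - 1) * ‖b - a‖ ∧
      (‖a‖ + ‖b‖) ^ (α - 1) * ‖b - a‖ ≤ c * ‖vpow α b - vpow α a‖ := by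
  obtain ⟨c, hc, hkey⟩ := scalar_key α hα
  refine ⟨c, hc, fun k a b => ?_⟩
  have hQ : ‖b - a‖ ^ 2 = ‖a‖ ^ 2 + ‖b‖ ^ 2 - 2 * ⟪a, b⟫ := by
    rw [norm_sub_sq_real, real_inner_comm b a]; ring
  have hvb : ‖vpow α b‖ = ‖b‖ ^ α := by
    rw [show vpow α b = ‖b‖ ^ (α - 1) • b from rfl, norm_smul, Real.norm_eq_abs,
      abs_of_nonneg (Real.rpow_nonneg (norm_nonneg b) _), aux_mul (norm_nonneg b) hα]
  have hva : ‖vpow α a‖ = ‖a‖ ^ α := by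
    rw [show vpow α a = ‖a‖ ^ (α - 1) • a from rfl, norm_smul, Real.norm_eq_abs,
      abs_of_nonneg (Real.rpow_nonneg (norm_nonneg a) _), aux_mul (norm_nonneg a) hα]
  have hinner : ⟪vpow α b, vpow α a⟫ = (‖a‖ ^ (α - 1) * ‖b‖ ^ (α - 1)) * ⟪a, b⟫ := by
    rw [show vpow α b = ‖b‖ ^ (α - 1) • b from rfl, show vpow α a = ‖a‖ ^ (α - 1) • a from rfl,
      real_inner_smul_left, real_inner_smul_right, real_inner_comm b a]
    ring
  have hP : ‖vpow α b - vpow α a‖ ^ 2 =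
      (‖a‖ ^ α) ^ 2 + (‖b‖ ^ α) ^ 2 - 2 * (‖a‖ ^ (α - 1) * ‖b‖ ^ (α - 1)) * ⟪a, b⟫ := by
    rw [norm_sub_sq_real, hinner, hvb, hva]; ring
  obtain ⟨k1, k2⟩ := hkey ‖a‖ ‖b‖ ⟪a, b⟫ (norm_nonneg a) (norm_nonneg b)
    (abs_real_inner_le_norm a b)
  have hW : 0 ≤ (‖a‖ + ‖b‖) ^ (α - 1) :=
    Real.rpow_nonneg (by positivity) _
  constructor
  · rw [one_div, inv_mul_le_iff₀ hc]
    have hsq : ‖vpow α b - vpow α a‖ ^ 2 ≤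
        (c * ((‖a‖ + ‖b‖) ^ (α - 1) * ‖b - a‖)) ^ 2 := by
      have e2 : (c * ((‖a‖ + ‖b‖) ^ (α - 1) * ‖b - a‖)) ^ 2 =
          c ^ 2 * (((‖a‖ + ‖b‖) ^ (α - 1)) ^ 2 * (‖a‖ ^ 2 + ‖b‖ ^ 2 - 2 * ⟪a, b⟫)) := by
        rw [mul_pow, mul_pow, hQ]
      rw [hP, e2]; exact k2
    calc ‖vpow α b - vpow α a‖ = √(‖vpow α b - vpow α a‖ ^ 2) :=
          (Real.sqrt_sq (norm_nonneg _)).symm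
      _ ≤ √((c * ((‖a‖ + ‖b‖) ^ (α - 1) * ‖b - a‖)) ^ 2) := Real.sqrt_le_sqrt hsq
      _ = c * ((‖a‖ + ‖b‖) ^ (α - 1) * ‖b - a‖) := Real.sqrt_sq (by positivity)
  · have hsq : ((‖a‖ + ‖b‖) ^ (α - 1) * ‖b - a‖) ^ 2 ≤
        (c * ‖vpow α b - vpow α a‖) ^ 2 := by
      have e1 : ((‖a‖ + ‖b‖) ^ (α - 1) * ‖b - a‖) ^ 2 =
          ((‖a‖ + ‖b‖) ^ (α - 1)) ^ 2 * (‖a‖ ^ 2 + ‖b‖ ^ 2 - 2 * ⟪a, b⟫) := by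
        rw [mul_pow, hQ]
      have e2 : (c * ‖vpow α b - vpow α a‖) ^ 2 =
          c ^ 2 * ((‖a‖ ^ α) ^ 2 + (‖b‖ ^ α) ^ 2 -
            2 * (‖a‖ ^ (α - 1) * ‖b‖ ^ (α - 1)) * ⟪a, b⟫) := by
        rw [mul_pow, hP]
      rw [e1, e2]; exact k1
    calc (‖a‖ + ‖b‖) ^ (α - 1) * ‖b - a‖
        = √(((‖a‖ + ‖b‖) ^ (α - 1) * ‖b - a‖) ^ 2) :=
          (Real.sqrt_sq (by positivity)).symm
      _ ≤ √((c * ‖vpow α b - vpow α a‖) ^ 2) := Real.sqrt_le_sqrt hsq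
      _ = c * ‖vpow α b - vpow α a‖ := Real.sqrt_sq (by positivity)

end
end

section
/- For any α ≥ 1 there exists a constant c = c(α) such that for all a, b ∈ ℝ^k (any k ∈ ℕ): |b − a|^α ≤ c·|⟦b⟧^α − ⟦a⟧^α|. -/
noncomputable section

lemma norm_vpow {k : ℕ} (α : ℝ) (hα : 0 < α) (u : EuclideanSpace ℝ (Fin k)) :
    ‖vpow α u‖ = ‖u‖ ^ α := by
  rcases eq_or_ne u 0 with rfl | hu
  · simp [vpow, Real.zero_rpow hα.ne']
  · have h : (0:ℝ) < ‖u‖ := norm_pos_iff.mpr hu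
    rw [vpow, norm_smul, Real.norm_of_nonneg (Real.rpow_nonneg h.le _),
      ← Real.rpow_add_one h.ne', sub_add_cancel]

lemma vpow_vpow {k : ℕ} (α : ℝ) (hα : 0 < α) (u : EuclideanSpace ℝ (Fin k)) :
    vpow (1/α) (vpow α u) = u := by
  rcases eq_or_ne u 0 with rfl | hu
  · simp [vpow]
  · have h : (0:ℝ) < ‖u‖ := norm_pos_iff.mpr hu
    rw [show vpow (1/α) (vpow α u) = ‖vpow α u‖ ^ (1/α - 1) • vpow α u from rfl,
      norm_vpow α hα, ← Real.rpow_mul (norm_nonneg u), vpow, smul_smul,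
      ← Real.rpow_add h]
    have : α * (1/α - 1) + (α - 1) = 0 := by field_simp; ring
    rw [this, Real.rpow_zero, one_smul]

lemma scalar_aux {β s t d : ℝ} (hβ0 : 0 < β) (hβ1 : β ≤ 1) (hd : 0 < d)
    (hds : d ≤ s) (hst : s ≤ t) (hts : t ≤ s + d) :
    (s ^ (β-1) - t ^ (β-1)) * s ≤ d ^ β := by
  have hs : 0 < s := hd.trans_le hds
  have ht : 0 < t := hs.trans_le hst
  have h1 : s ^ (β-1) * s = s ^ β := by
    rw [← Real.rpow_add_one hs.ne', sub_add_cancel]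
  have h2 : t ^ (β-1) * (t - d) ≤ t ^ (β-1) * s :=
    mul_le_mul_of_nonneg_left (by linarith) (Real.rpow_nonneg ht.le _)
  have h3 : t ^ (β-1) * t = t ^ β := by
    rw [← Real.rpow_add_one ht.ne', sub_add_cancel]
  have h4 : s ^ β ≤ t ^ β := Real.rpow_le_rpow hs.le hst hβ0.le
  have h5 : t ^ (β-1) ≤ d ^ (β-1) :=
    Real.rpow_le_rpow_of_nonpos hd (hds.trans hst) (by linarith)
  have h6 : d ^ (β-1) * d = d ^ β := by
    rw [← Real.rpow_add_one hd.ne', sub_add_cancel]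
  nlinarith [Real.rpow_nonneg ht.le (β-1)]

lemma holder_aux {β : ℝ} (hβ0 : 0 < β) (hβ1 : β ≤ 1) {k : ℕ}
    (x y : EuclideanSpace ℝ (Fin k)) (hxy : ‖y‖ ≤ ‖x‖) :
    ‖vpow β x - vpow β y‖ ≤ 4 * ‖x - y‖ ^ β := by
  rcases eq_or_ne x y with rfl | hne
  · simp
    positivity
  have hd : (0:ℝ) < ‖x - y‖ := by
    rw [norm_pos_iff]; exact sub_ne_zero_of_ne hne
  rcases le_or_gt ‖x‖ (2 * ‖x - y‖) with hA | hB
  · calc ‖vpow β x - vpow β y‖ ≤ ‖vpow β x‖ + ‖vpow β y‖ := norm_sub_le _ _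
      _ = ‖x‖ ^ β + ‖y‖ ^ β := by rw [norm_vpow β hβ0, norm_vpow β hβ0]
      _ ≤ 2 * ‖x‖ ^ β := by
          have := Real.rpow_le_rpow (norm_nonneg y) hxy hβ0.le; linarith
      _ ≤ 2 * (2 * ‖x - y‖) ^ β := by
          gcongr 2 * ?_ ^ β
      _ = 2 * (2 ^ β * ‖x - y‖ ^ β) := by
          rw [Real.mul_rpow (by norm_num) (norm_nonneg _)]
      _ ≤ 4 * ‖x - y‖ ^ β := by
          have h2 : (2:ℝ) ^ β ≤ 2 := by
            calc (2:ℝ) ^ β ≤ 2 ^ (1:ℝ) :=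
                  Real.rpow_le_rpow_of_exponent_le one_le_two hβ1
              _ = 2 := Real.rpow_one 2
          nlinarith [Real.rpow_nonneg hd.le β]
  · -- `2‖x-y‖ < ‖x‖`
    have hs : ‖x‖ - ‖x - y‖ ≤ ‖y‖ := by
      have := norm_sub_norm_le x y
      have := abs_le.mp (abs_norm_sub_norm_le x y)
      linarith [this.1]
    have hds : ‖x - y‖ ≤ ‖y‖ := by linarith
    have hts : ‖x‖ ≤ ‖y‖ + ‖x - y‖ := by linarith
    have hdt : ‖x - y‖ ≤ ‖x‖ := by linarith
    have hexp : β - 1 ≤ 0 := by linarith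
    have hdecomp : vpow β x - vpow β y
        = ‖x‖ ^ (β-1) • (x - y) + (‖x‖ ^ (β-1) - ‖y‖ ^ (β-1)) • y := by
      simp only [vpow, smul_sub, sub_smul]
      abel
    have hmono : ‖x‖ ^ (β-1) ≤ ‖y‖ ^ (β-1) :=
      Real.rpow_le_rpow_of_nonpos (hd.trans_le hds) hxy hexp
    have hle1 : ‖x‖ ^ (β-1) * ‖x - y‖ ≤ ‖x - y‖ ^ β := by
      have h5 : ‖x‖ ^ (β-1) ≤ ‖x - y‖ ^ (β-1) :=
        Real.rpow_le_rpow_of_nonpos hd hdt hexp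
      have h6 : ‖x - y‖ ^ (β-1) * ‖x - y‖ = ‖x - y‖ ^ β := by
        rw [← Real.rpow_add_one hd.ne', sub_add_cancel]
      nlinarith
    have hle2 : (‖y‖ ^ (β-1) - ‖x‖ ^ (β-1)) * ‖y‖ ≤ ‖x - y‖ ^ β :=
      scalar_aux hβ0 hβ1 hd hds hxy hts
    calc ‖vpow β x - vpow β y‖
        ≤ ‖‖x‖ ^ (β-1) • (x - y)‖ + ‖(‖x‖ ^ (β-1) - ‖y‖ ^ (β-1)) • y‖ := by
          rw [hdecomp]; exact norm_add_le _ _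
      _ = ‖x‖ ^ (β-1) * ‖x - y‖ + (‖y‖ ^ (β-1) - ‖x‖ ^ (β-1)) * ‖y‖ := by
          rw [norm_smul, norm_smul, Real.norm_of_nonneg (Real.rpow_nonneg (norm_nonneg x) _),
            Real.norm_of_nonpos (by linarith)]
          ring
      _ ≤ ‖x - y‖ ^ β + ‖x - y‖ ^ β := add_le_add hle1 hle2
      _ ≤ 4 * ‖x - y‖ ^ β := by nlinarith [Real.rpow_nonneg hd.le β]

lemma holder {β : ℝ} (hβ0 : 0 < β) (hβ1 : β ≤ 1) {k : ℕ}
    (x y : EuclideanSpace ℝ (Fin k)) :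
    ‖vpow β x - vpow β y‖ ≤ 4 * ‖x - y‖ ^ β := by
  rcases le_total ‖y‖ ‖x‖ with h | h
  · exact holder_aux hβ0 hβ1 x y h
  · rw [norm_sub_rev, norm_sub_rev x y]
    exact holder_aux hβ0 hβ1 y x h

/-- Lemma 3.3: `|b − a|^α ≤ c |⟦b⟧^α − ⟦a⟧^α|` for `α ≥ 1`. -/
theorem vpow_diff_lower_bound (α : ℝ) (hα : 1 ≤ α) :
    ∃ c : ℝ, 0 < c ∧ ∀ (k : ℕ) (a b : EuclideanSpace ℝ (Fin k)),
      ‖b - a‖ ^ α ≤ c * ‖vpow α b - vpow α a‖ := by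
  have hα0 : (0:ℝ) < α := lt_of_lt_of_le one_pos hα
  refine ⟨(4:ℝ) ^ α, Real.rpow_pos_of_pos (by norm_num) α, fun k a b => ?_⟩
  have hβ0 : (0:ℝ) < 1/α := by positivity
  have hβ1 : 1/α ≤ 1 := by
    rw [div_le_one hα0]; exact hα
  have h1 : ‖b - a‖ ≤ 4 * ‖vpow α b - vpow α a‖ ^ (1/α) := by
    have := holder hβ0 hβ1 (vpow α b) (vpow α a)
    rwa [vpow_vpow α hα0, vpow_vpow α hα0] at this
  calc ‖b - a‖ ^ α ≤ (4 * ‖vpow α b - vpow α a‖ ^ (1/α)) ^ α :=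
        Real.rpow_le_rpow (norm_nonneg _) h1 hα0.le
    _ = 4 ^ α * (‖vpow α b - vpow α a‖ ^ (1/α)) ^ α := by
        rw [Real.mul_rpow (by norm_num) (Real.rpow_nonneg (norm_nonneg _) _)]
    _ = 4 ^ α * ‖vpow α b - vpow α a‖ := by
        rw [← Real.rpow_mul (norm_nonneg _), one_div_mul_cancel hα0.ne', Real.rpow_one]

end
end
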